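/- arXiv:2101.00908 — 2 statements merged into one kernel-verified Lean document; each statement's English description precedes it below -/
import Mathlib

section
/- If (x₁*, …, x_m*, λ*) is a competitive equilibrium — i.e., each x_i* lies in C_i and minimizes the price-adjusted cost x_i ↦ f_i(x_i) + ⟪λ*, A_i x_i⟫ over C_i, and the market clears, Σ_i A_i x_i* = b — then (x₁*, …, x_m*) is an optimal solution of the aggregated program: it minimizes Σ_i f_i(x_i) over all (x₁, …, x_m) ∈ Π_i C_i satisfying Σ_i A_i x_i = b. -/
open scoped RealInnerProductSpace

theorem Finset.sum_le_sum_of_add_le_add_of_sum_eq {ι M : Type*} [AddCommMonoid M]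
    [PartialOrder M] [IsOrderedCancelAddMonoid M] (s : Finset ι) {a b c d : ι → M}
    (h : ∀ i ∈ s, a i + c i ≤ b i + d i) (hcd : ∑ i ∈ s, c i = ∑ i ∈ s, d i) :
    ∑ i ∈ s, a i ≤ ∑ i ∈ s, b i := by
  have hsum := Finset.sum_le_sum h
  rw [Finset.sum_add_distrib, Finset.sum_add_distrib, hcd] at hsum
  exact le_of_add_le_add_right hsum

theorem competitive_equilibrium_is_aggregate_optimum_general
    {m k : ℕ} (n : Fin m → ℕ)
    (C : ∀ i : Fin m, Set (EuclideanSpace ℝ (Fin (n i))))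
    (f : ∀ i : Fin m, EuclideanSpace ℝ (Fin (n i)) → ℝ)
    (A : ∀ i : Fin m, EuclideanSpace ℝ (Fin (n i)) →ₗ[ℝ] EuclideanSpace ℝ (Fin k))
    (b : EuclideanSpace ℝ (Fin k))
    (xstar : ∀ i : Fin m, EuclideanSpace ℝ (Fin (n i)))
    (lamstar : EuclideanSpace ℝ (Fin k))
    (hagent : ∀ i, ∀ y ∈ C i,
      f i (xstar i) + ⟪lamstar, A i (xstar i)⟫ ≤ f i y + ⟪lamstar, A i y⟫)
    (hclear : ∑ i, A i (xstar i) = b) :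
    ∀ x : ∀ i : Fin m, EuclideanSpace ℝ (Fin (n i)),
      (∀ i, x i ∈ C i) → ∑ i, A i (x i) = b →
        ∑ i, f i (xstar i) ≤ ∑ i, f i (x i) := by
  intro x hx hx_clear
  refine Finset.sum_le_sum_of_add_le_add_of_sum_eq _ (fun i _ => hagent i (x i) (hx i)) ?_
  rw [← inner_sum, ← inner_sum, hclear, hx_clear]

/-- **Competitive equilibrium implies optimality of the aggregated program.**
If each agent `i` chooses `xstar i ∈ C i` minimizing its price-adjusted cost
`x ↦ f i x + ⟪lamstar, A i x⟫` over `C i`, and the market clears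
(`∑ i, A i (xstar i) = b`), then `xstar` minimizes `∑ i, f i (x i)` over all
profiles `x` with `x i ∈ C i` and `∑ i, A i (x i) = b`. -/
theorem competitive_equilibrium_is_aggregate_optimum
    {m k : ℕ} (n : Fin m → ℕ)
    (C : ∀ i : Fin m, Set (EuclideanSpace ℝ (Fin (n i))))
    (f : ∀ i : Fin m, EuclideanSpace ℝ (Fin (n i)) → ℝ)
    (A : ∀ i : Fin m, EuclideanSpace ℝ (Fin (n i)) →ₗ[ℝ] EuclideanSpace ℝ (Fin k))
    (b : EuclideanSpace ℝ (Fin k))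
    (xstar : ∀ i : Fin m, EuclideanSpace ℝ (Fin (n i)))
    (lamstar : EuclideanSpace ℝ (Fin k))
    (hmem : ∀ i, xstar i ∈ C i)
    (hagent : ∀ i, ∀ y ∈ C i,
      f i (xstar i) + ⟪lamstar, A i (xstar i)⟫ ≤ f i y + ⟪lamstar, A i y⟫)
    (hclear : ∑ i, A i (xstar i) = b) :
    ∀ x : ∀ i : Fin m, EuclideanSpace ℝ (Fin (n i)),
      (∀ i, x i ∈ C i) → ∑ i, A i (x i) = b →
        ∑ i, f i (xstar i) ≤ ∑ i, f i (x i) :=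
  competitive_equilibrium_is_aggregate_optimum_general n C f A b xstar lamstar hagent hclear
end

section
/- If each cost f_i is strictly convex on C_i, then the equilibrium allocation is unique: for any two competitive equilibria (x₁*, …, x_m*, λ*) and (y₁*, …, y_m*, μ*), one has x_i* = y_i* for every agent i. -/
open scoped RealInnerProductSpace

/-!
At prices `λ`, every feasible allocation pays the same total `⟪λ, b⟫` for its
market terms, so summing the agents' optimality conditions shows that an
equilibrium allocation minimises the total cost `∑ i, f i (x i)` over the
feasible allocations. These form a convex set on which the total cost is
strictly convex, and a strictly convex function has at most one minimiser.
-/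

open Finset

section StrictConvexSum

variable {𝕜 ι β : Type*} [Fintype ι] {E : ι → Type*} [Semiring 𝕜] [PartialOrder 𝕜]
  [∀ i, AddCommMonoid (E i)] [∀ i, Module 𝕜 (E i)]
  [AddCommMonoid β] [PartialOrder β] [IsOrderedCancelAddMonoid β] [Module 𝕜 β]

theorem strictConvexOn_univ_pi_sum {C : ∀ i, Set (E i)} {f : ∀ i, E i → β}
    (hf : ∀ i, StrictConvexOn 𝕜 (C i) (f i)) :
    StrictConvexOn 𝕜 (Set.univ.pi C) (fun x ↦ ∑ i, f i (x i)) := by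
  refine ⟨convex_pi fun i _ ↦ (hf i).1, fun x hx y hy hxy a b ha hb hab ↦ ?_⟩
  obtain ⟨j, hj⟩ := Function.ne_iff.mp hxy
  calc ∑ i, f i ((a • x + b • y) i)
      < ∑ i, (a • f i (x i) + b • f i (y i)) :=
        sum_lt_sum (fun i _ ↦ (hf i).convexOn.2 (hx i trivial) (hy i trivial) ha.le hb.le hab)
          ⟨j, mem_univ j, (hf j).2 (hx j trivial) (hy j trivial) hj ha hb hab⟩
    _ = a • ∑ i, f i (x i) + b • ∑ i, f i (y i) := by
        rw [sum_add_distrib, smul_sum, smul_sum]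

end StrictConvexSum

section CompetitiveEquilibrium

variable {ι F : Type*} [Fintype ι] {E : ι → Type*} [∀ i, AddCommGroup (E i)]
  [∀ i, Module ℝ (E i)] [NormedAddCommGroup F] [InnerProductSpace ℝ F]
  {C : ∀ i, Set (E i)} {f : ∀ i, E i → ℝ} {A : ∀ i, E i →ₗ[ℝ] F} {b : F}

variable (C A b) in
def feasibleAllocations : Set (∀ i, E i) :=
  Set.univ.pi C ∩ {x | ∑ i, A i (x i) = b}

theorem convex_feasibleAllocations (hC : ∀ i, Convex ℝ (C i)) :
    Convex ℝ (feasibleAllocations C A b) := by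
  have hclear : {x : ∀ i, E i | ∑ i, A i (x i) = b} =
      ((∑ i, (A i).comp (LinearMap.proj i) : (∀ i, E i) →ₗ[ℝ] F)) ⁻¹' {b} := by
    ext
    simp
  rw [feasibleAllocations, hclear]
  exact (convex_pi fun i _ ↦ hC i).inter <| (convex_singleton b).linear_preimage _

variable (C f A b) in
structure IsCompetitiveEquilibrium (x : ∀ i, E i) (p : F) : Prop where
  mem : ∀ i, x i ∈ C i
  optimal : ∀ i, ∀ y ∈ C i, f i (x i) + ⟪p, A i (x i)⟫ ≤ f i y + ⟪p, A i y⟫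
  clear : ∑ i, A i (x i) = b

namespace IsCompetitiveEquilibrium

variable {x : ∀ i, E i} {p : F}

theorem mem_feasibleAllocations (h : IsCompetitiveEquilibrium C f A b x p) :
    x ∈ feasibleAllocations C A b :=
  ⟨fun i _ ↦ h.mem i, h.clear⟩

theorem isMinOn_totalCost (h : IsCompetitiveEquilibrium C f A b x p) :
    IsMinOn (fun w ↦ ∑ i, f i (w i)) (feasibleAllocations C A b) x := by
  rintro w ⟨hwC, hwb : ∑ i, A i (w i) = b⟩
  have hcost := sum_le_sum fun i (_ : i ∈ univ) ↦ h.optimal i (w i) (hwC i trivial)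
  rw [sum_add_distrib, sum_add_distrib, ← inner_sum, ← inner_sum, h.clear, hwb] at hcost
  exact add_le_add_iff_right _ |>.mp hcost

end IsCompetitiveEquilibrium

end CompetitiveEquilibrium

/-- **Uniqueness of the equilibrium allocation under strict convexity.**
If each cost `f i` is strictly convex on `C i`, then any two competitive
equilibria `(xstar, lamstar)` and `(ystar, mustar)` have the same allocation:
`xstar i = ystar i` for every agent `i`. -/
theorem equilibrium_allocation_unique_of_strictConvex
    {m k : ℕ} (n : Fin m → ℕ)
    (C : ∀ i : Fin m, Set (EuclideanSpace ℝ (Fin (n i))))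
    (f : ∀ i : Fin m, EuclideanSpace ℝ (Fin (n i)) → ℝ)
    (A : ∀ i : Fin m, EuclideanSpace ℝ (Fin (n i)) →ₗ[ℝ] EuclideanSpace ℝ (Fin k))
    (b : EuclideanSpace ℝ (Fin k))
    (hf : ∀ i, StrictConvexOn ℝ (C i) (f i))
    (xstar ystar : ∀ i : Fin m, EuclideanSpace ℝ (Fin (n i)))
    (lamstar mustar : EuclideanSpace ℝ (Fin k))
    (hxmem : ∀ i, xstar i ∈ C i)
    (hxagent : ∀ i, ∀ y ∈ C i,
      f i (xstar i) + ⟪lamstar, A i (xstar i)⟫ ≤ f i y + ⟪lamstar, A i y⟫)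
    (hxclear : ∑ i, A i (xstar i) = b)
    (hymem : ∀ i, ystar i ∈ C i)
    (hyagent : ∀ i, ∀ y ∈ C i,
      f i (ystar i) + ⟪mustar, A i (ystar i)⟫ ≤ f i y + ⟪mustar, A i y⟫)
    (hyclear : ∑ i, A i (ystar i) = b) :
    ∀ i, xstar i = ystar i := by
  have hx : IsCompetitiveEquilibrium C f A b xstar lamstar := ⟨hxmem, hxagent, hxclear⟩
  have hy : IsCompetitiveEquilibrium C f A b ystar mustar := ⟨hymem, hyagent, hyclear⟩
  have hcost : StrictConvexOn ℝ (feasibleAllocations C A b) (fun w ↦ ∑ i, f i (w i)) :=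
    (strictConvexOn_univ_pi_sum hf).subset Set.inter_subset_left
      (convex_feasibleAllocations fun i ↦ (hf i).1)
  exact congrFun <| hcost.eq_of_isMinOn hx.isMinOn_totalCost hy.isMinOn_totalCost
    hx.mem_feasibleAllocations hy.mem_feasibleAllocations
end
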